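/- arXiv:2207.02617 — 3 statements merged into one kernel-verified Lean document; each statement's English description precedes it below -/
import Mathlib

section
/- Given n, λ, Λ, c_U and α, there exist a bounded function Φ : ℝⁿ → [0,∞) and a bounded nonnegative function ψ : ℝⁿ → [0,∞) supported in the closed ball B̄_{1/4} such that for every ν satisfying condition (A): (i) Φ = 0 on ℝⁿ ∖ B_{2√n}; (ii) Φ ≥ 2 on the cube 𝒬₃; (iii) for every x ∈ ℝⁿ one has ∫_{ℝⁿ} Λ δ(Φ,x,y)⁻ ν(x,|y|) dy < ∞ and M⁻_ν Φ(x) := ∫_{ℝⁿ} (λ δ(Φ,x,y)⁺ − Λ δ(Φ,x,y)⁻) ν(x,|y|) dy ≥ −ψ(x) (the value +∞ being allowed on the left-hand side). -/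
open MeasureTheory Metric Set
open scoped ENNReal

noncomputable section

/-- Euclidean space `ℝⁿ`. -/
abbrev Eucl (n : ℕ) := EuclideanSpace ℝ (Fin n)

/-- Second-order difference `δ(u,x,y) = u(x+y) + u(x−y) − 2u(x)`. -/
def delta2 (n : ℕ) (u : Eucl n → ℝ) (x y : Eucl n) : ℝ :=
  u (x + y) + u (x - y) - 2 * u x

/-- `h(x,r) = ∫ min(1, |y|²/r²) ν(x,|y|) dy`. -/
def hfun (n : ℕ) (ν : Eucl n → ℝ → ℝ) (x : Eucl n) (r : ℝ) : ℝ :=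
  ∫ y : Eucl n, min 1 (‖y‖ ^ 2 / r ^ 2) * ν x ‖y‖

/-- `K(x,r) = r⁻² ∫_{|y|<r} |y|² ν(x,|y|) dy`. -/
def Kfun (n : ℕ) (ν : Eucl n → ℝ → ℝ) (x : Eucl n) (r : ℝ) : ℝ :=
  (∫ y in Metric.ball (0 : Eucl n) r, ‖y‖ ^ 2 * ν x ‖y‖) / r ^ 2

/-- Standing assumptions on the kernel: measurability, nonnegativity,
integrability of `min(1,|y|²) ν(x,|y|)`. -/
def KernelOK (n : ℕ) (ν : Eucl n → ℝ → ℝ) : Prop :=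
  Measurable (Function.uncurry ν) ∧ (∀ x r, 0 < r → 0 ≤ ν x r) ∧
    ∀ x : Eucl n, Integrable (fun y : Eucl n => min 1 (‖y‖ ^ 2) * ν x ‖y‖)

/-- (A1) `h(x,1) = 1`. -/
def CondA1 (n : ℕ) (ν : Eucl n → ℝ → ℝ) : Prop := ∀ x, hfun n ν x 1 = 1

/-- (A2) `r ↦ ν(x,r)` is nonincreasing. -/
def CondA2 (n : ℕ) (ν : Eucl n → ℝ → ℝ) : Prop :=
  ∀ (x : Eucl n) (s r : ℝ), 0 < s → s ≤ r → ν x r ≤ ν x s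

/-- (A3) the weak scaling condition. -/
def CondA3 (n : ℕ) (ν : Eucl n → ℝ → ℝ) (cU α : ℝ) : Prop :=
  ∀ (x : Eucl n) (r t : ℝ), 0 < r → 1 ≤ t →
    hfun n ν x (t * r) ≤ cU * t ^ (-α) * hfun n ν x r

/-- Condition (A). -/
def CondA (n : ℕ) (ν : Eucl n → ℝ → ℝ) (cU α : ℝ) : Prop :=
  CondA1 n ν ∧ CondA2 n ν ∧ CondA3 n ν cU α

/-- Condition (B): `ν(x₁,r)/h(x₁,s) ≤ c* ν(x₂,r)/h(x₂,s)` for `|x₁−x₂| ≤ s ≤ r`. -/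
def CondB (n : ℕ) (ν : Eucl n → ℝ → ℝ) (cs : ℝ) : Prop :=
  ∀ (x₁ x₂ : Eucl n) (s r : ℝ), 0 < s → dist x₁ x₂ ≤ s → s ≤ r →
    ν x₁ r * hfun n ν x₂ s ≤ cs * (ν x₂ r * hfun n ν x₁ s)

/-- Maximal Pucci-type operator `M⁺_ν`. -/
def Mplus (n : ℕ) (lam Lam : ℝ) (ν : Eucl n → ℝ → ℝ) (u : Eucl n → ℝ) (x : Eucl n) : ℝ :=
  ∫ y : Eucl n, (Lam * max (delta2 n u x y) 0 - lam * max (-delta2 n u x y) 0) * ν x ‖y‖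

/-- Minimal Pucci-type operator `M⁻_ν`. -/
def Mminus (n : ℕ) (lam Lam : ℝ) (ν : Eucl n → ℝ → ℝ) (u : Eucl n → ℝ) (x : Eucl n) : ℝ :=
  ∫ y : Eucl n, (lam * max (delta2 n u x y) 0 - Lam * max (-delta2 n u x y) 0) * ν x ‖y‖

/-- `C^{1,1}` regularity on a set: differentiable with Lipschitz derivative. -/
def C11On (n : ℕ) (φ : Eucl n → ℝ) (s : Set (Eucl n)) : Prop :=
  DifferentiableOn ℝ φ s ∧
    ∃ L : NNReal, LipschitzOnWith L (fun x => fderivWithin ℝ φ s x) s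

open Classical in
/-- The test function: `φ` on `N`, `u` elsewhere. -/
def replaceOn (n : ℕ) (u φ : Eucl n → ℝ) (N : Set (Eucl n)) : Eucl n → ℝ :=
  fun y => if y ∈ N then φ y else u y

/-- Boundedness on all of `ℝⁿ`. -/
def IsBdd (n : ℕ) (u : Eucl n → ℝ) : Prop := ∃ M, ∀ x, |u x| ≤ M

/-- Viscosity subsolution of `M⁺_ν u = g` in `Ω`. -/
def IsViscositySubsol (n : ℕ) (lam Lam : ℝ) (ν : Eucl n → ℝ → ℝ) (u g : Eucl n → ℝ)
    (Ω : Set (Eucl n)) : Prop :=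
  ∀ x ∈ Ω, ∀ N : Set (Eucl n), IsOpen N → x ∈ N → N ⊆ Ω →
    ∀ φ : Eucl n → ℝ, C11On n φ (closure N) → φ x = u x → (∀ y ∈ N, u y ≤ φ y) →
      g x ≤ Mplus n lam Lam ν (replaceOn n u φ N) x

/-- Viscosity supersolution of `M⁻_ν u = g` in `Ω`. -/
def IsViscositySupersol (n : ℕ) (lam Lam : ℝ) (ν : Eucl n → ℝ → ℝ) (u g : Eucl n → ℝ)
    (Ω : Set (Eucl n)) : Prop :=
  ∀ x ∈ Ω, ∀ N : Set (Eucl n), IsOpen N → x ∈ N → N ⊆ Ω →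
    ∀ φ : Eucl n → ℝ, C11On n φ (closure N) → φ x = u x → (∀ y ∈ N, φ y ≤ u y) →
      Mminus n lam Lam ν (replaceOn n u φ N) x ≤ g x

/-- Open axis-parallel cube `𝒬_l(x)` with center `x` and side length `l`. -/
def cube (n : ℕ) (x : Eucl n) (l : ℝ) : Set (Eucl n) :=
  {y | ∀ i, |y i - x i| < l / 2}

/-!
The barrier is a truncated Gaussian `Φ = a (e^{-β|z|²} - e^{-4nβ})⁺`. Where `Φ(x) > 0`, the
second difference satisfies `δ(Φ,x,y) ≥ 2a e^{-β|x|²} (e^{-β|y|²} cosh(2β⟨x,y⟩) - 1)`, and the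
bracket is at least `-min(1, β|y|²)`. Hence the negative part of `M⁻_ν Φ(x)` is at most
`2a e^{-β|x|²} Λ h(x, β^{-1/2})`, which is bounded by `2aβΛ`; near the origin `ψ` pays for it.
For `|x| > 1/4`, (A3) makes `h(x, β^{-1/2}) ≥ 32n` once `β` is large, so that half of it comes from
the ball `16n|y|² < 1`. There, in the cone `|⟨x,y⟩| ≥ |x||y|/√n` the cosh term dominates and the
bracket is at least `(2nΛ/λ) min(1, β|y|²)`. Since `ν` is radial and `n` rotated copies of the cone
cover `ℝⁿ`, the positive part of `M⁻_ν Φ(x)` dominates the negative part.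
-/

open Real
open scoped RealInnerProductSpace

namespace Real

lemma one_add_sq_div_four_le_cosh (w : ℝ) : 1 + w ^ 2 / 4 ≤ cosh w := by
  have h₁ := quadratic_le_exp_of_nonneg (abs_nonneg w)
  have h₂ := add_one_le_exp (-|w|)
  rw [sq_abs] at h₁
  rw [← cosh_abs, cosh_eq]
  linarith

lemma exp_abs_div_two_le_cosh (w : ℝ) : exp |w| / 2 ≤ cosh w := by
  rw [← cosh_abs, cosh_eq]
  linarith [exp_pos (-|w|)]

lemma neg_min_one_le_exp_neg_mul_cosh_sub_one (u w : ℝ) :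
    -min 1 u ≤ exp (-u) * cosh w - 1 := by
  have h : 1 - exp (-u) ≤ min 1 u :=
    le_min (by linarith [exp_pos (-u)]) (by linarith [add_one_le_exp (-u)])
  nlinarith [one_le_cosh w, exp_pos (-u)]

lemma mul_min_one_le_exp_neg_mul_cosh_sub_one {κ C β s t : ℝ} (hκ : 0 ≤ κ) (hC : 0 < C)
    (hβ : 8 * C * (κ + 1) ^ 2 ≤ β) (hsC : s ≤ C * t ^ 2) (hst : s ≤ |t|) :
    κ * min 1 (β * s) ≤ exp (-(β * s)) * cosh (2 * β * t) - 1 := by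
  have hβ₀ : 0 < β := lt_of_lt_of_le (by positivity) hβ
  have hβt : 8 * (κ + 1) ^ 2 * s ≤ β * t ^ 2 := by
    have := mul_le_mul_of_nonneg_left hsC (by positivity : (0 : ℝ) ≤ 8 * (κ + 1) ^ 2)
    nlinarith [mul_le_mul_of_nonneg_right hβ (sq_nonneg t)]
  rcases le_total (β * s) (1 / 2) with hsmall | hlarge
  · rw [min_eq_right (by linarith)]
    have h₁ := add_one_le_exp (-(β * s))
    have h₂ := one_add_sq_div_four_le_cosh (2 * β * t)
    have h₃ : 2 * (κ + 1) * (β * s) ≤ (β * t) ^ 2 := by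
      nlinarith [mul_le_mul_of_nonneg_left hβt hβ₀.le]
    nlinarith [mul_le_mul h₁ h₂ (by positivity) (exp_pos _).le]
  · have hβt' : 2 * κ + 1 ≤ β * |t| := by
      rw [← sq_le_sq₀ (by positivity) (by positivity), mul_pow, sq_abs]
      nlinarith [mul_le_mul_of_nonneg_left hβt hβ₀.le]
    have hcosh : exp (2 * (β * |t|)) / 2 ≤ cosh (2 * β * t) := by
      simpa [abs_mul, abs_of_pos hβ₀, mul_assoc] using exp_abs_div_two_le_cosh (2 * β * t)
    have hexp : exp (β * |t|) ≤ exp (-(β * s)) * exp (2 * (β * |t|)) := by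
      rw [← exp_add, exp_le_exp]
      nlinarith [mul_le_mul_of_nonneg_left hst hβ₀.le]
    have hmin : κ * min 1 (β * s) ≤ κ := mul_le_of_le_one_right hκ (min_le_left _ _)
    nlinarith [add_one_le_exp (β * |t|), mul_le_mul_of_nonneg_left hcosh (exp_pos (-(β * s))).le]

end Real

lemma min_one_mul_le_mul_min_one {β s : ℝ} (hβ : 1 ≤ β) :
    min 1 (β * s) ≤ β * min 1 s := by
  calc min 1 (β * s) ≤ min β (β * s) := min_le_min_right _ hβ
    _ = β * min 1 s := by rw [mul_min_of_nonneg _ _ (by linarith), mul_one]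

lemma exp_neg_mul_norm_add_sq_add_exp_neg_mul_norm_sub_sq {E : Type*} [NormedAddCommGroup E]
    [InnerProductSpace ℝ E] (β : ℝ) (x y : E) :
    exp (-(β * ‖x + y‖ ^ 2)) + exp (-(β * ‖x - y‖ ^ 2)) =
      2 * exp (-(β * ‖x‖ ^ 2)) * (exp (-(β * ‖y‖ ^ 2)) * cosh (2 * β * ⟪x, y⟫)) := by
  rw [norm_add_sq_real, norm_sub_sq_real, cosh_eq]
  have h₁ : -(β * (‖x‖ ^ 2 + 2 * ⟪x, y⟫ + ‖y‖ ^ 2)) =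
      -(β * ‖x‖ ^ 2) + -(β * ‖y‖ ^ 2) + -(2 * β * ⟪x, y⟫) := by ring
  have h₂ : -(β * (‖x‖ ^ 2 - 2 * ⟪x, y⟫ + ‖y‖ ^ 2)) =
      -(β * ‖x‖ ^ 2) + -(β * ‖y‖ ^ 2) + 2 * β * ⟪x, y⟫ := by ring
  rw [h₁, h₂, exp_add, exp_add, exp_add, exp_add]
  ring

lemma continuous_delta2 {n : ℕ} {u : Eucl n → ℝ} (hu : Continuous u) (x : Eucl n) :
    Continuous (delta2 n u x) := by
  unfold delta2; fun_prop

def truncGauss (n : ℕ) (a β c : ℝ) (z : Eucl n) : ℝ :=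
  a * max (exp (-(β * ‖z‖ ^ 2)) - c) 0

section TruncGauss

variable {n : ℕ} {a β c : ℝ}

lemma truncGauss_nonneg (ha : 0 ≤ a) (z : Eucl n) : 0 ≤ truncGauss n a β c z :=
  mul_nonneg ha (le_max_right _ _)

lemma truncGauss_le (ha : 0 ≤ a) (hβ : 0 ≤ β) (hc : 0 ≤ c) (z : Eucl n) :
    truncGauss n a β c z ≤ a := by
  refine mul_le_of_le_one_right ha (max_le ?_ zero_le_one)
  have : exp (-(β * ‖z‖ ^ 2)) ≤ 1 := exp_le_one_iff.2 (by simp only [neg_nonpos]; positivity)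
  linarith

lemma truncGauss_eq_zero {z : Eucl n} (hz : exp (-(β * ‖z‖ ^ 2)) ≤ c) :
    truncGauss n a β c z = 0 := by
  rw [truncGauss, max_eq_right (sub_nonpos.2 hz), mul_zero]

lemma continuous_truncGauss : Continuous (truncGauss n a β c) := by
  unfold truncGauss; fun_prop

lemma le_delta2_truncGauss (ha : 0 ≤ a) {x : Eucl n} (hx : c ≤ exp (-(β * ‖x‖ ^ 2)))
    (y : Eucl n) :
    2 * a * exp (-(β * ‖x‖ ^ 2)) * (exp (-(β * ‖y‖ ^ 2)) * cosh (2 * β * ⟪x, y⟫) - 1) ≤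
      delta2 n (truncGauss n a β c) x y := by
  have h := exp_neg_mul_norm_add_sq_add_exp_neg_mul_norm_sub_sq β x y
  have h₁ := mul_le_mul_of_nonneg_left (le_max_left (exp (-(β * ‖x + y‖ ^ 2)) - c) 0) ha
  have h₂ := mul_le_mul_of_nonneg_left (le_max_left (exp (-(β * ‖x - y‖ ^ 2)) - c) 0) ha
  rw [delta2, truncGauss, truncGauss, truncGauss, max_eq_left (sub_nonneg.2 hx)]
  nlinarith

lemma delta2_truncGauss_nonneg (ha : 0 ≤ a) {x : Eucl n} (hx : exp (-(β * ‖x‖ ^ 2)) ≤ c)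
    (y : Eucl n) : 0 ≤ delta2 n (truncGauss n a β c) x y := by
  rw [delta2, truncGauss_eq_zero hx]
  linarith [truncGauss_nonneg (β := β) (c := c) ha (x + y),
    truncGauss_nonneg (β := β) (c := c) ha (x - y)]

lemma negPart_delta2_truncGauss_le (ha : 0 ≤ a) (hβ : 0 ≤ β) (x y : Eucl n) :
    max (-delta2 n (truncGauss n a β c) x y) 0 ≤
      2 * a * exp (-(β * ‖x‖ ^ 2)) * min 1 (β * ‖y‖ ^ 2) := by
  have hK : 0 ≤ 2 * a * exp (-(β * ‖x‖ ^ 2)) := by positivity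
  have hmin : 0 ≤ min 1 (β * ‖y‖ ^ 2) := le_min zero_le_one (by positivity)
  refine max_le ?_ (mul_nonneg hK hmin)
  rcases le_total c (exp (-(β * ‖x‖ ^ 2))) with hx | hx
  · have h := le_delta2_truncGauss ha hx y
    have h' := neg_min_one_le_exp_neg_mul_cosh_sub_one (β * ‖y‖ ^ 2) (2 * β * ⟪x, y⟫)
    nlinarith [mul_le_mul_of_nonneg_left h' hK]
  · linarith [delta2_truncGauss_nonneg ha hx y, mul_nonneg hK hmin]

lemma negPart_delta2_truncGauss_le_mul_min (ha : 0 ≤ a) (hβ : 1 ≤ β) (x y : Eucl n) :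
    max (-delta2 n (truncGauss n a β c) x y) 0 ≤ 2 * a * β * min 1 (‖y‖ ^ 2) := by
  have hG : exp (-(β * ‖x‖ ^ 2)) ≤ 1 := exp_le_one_iff.2 (by simp only [neg_nonpos]; positivity)
  calc max (-delta2 n (truncGauss n a β c) x y) 0
      ≤ 2 * a * exp (-(β * ‖x‖ ^ 2)) * min 1 (β * ‖y‖ ^ 2) :=
        negPart_delta2_truncGauss_le ha (by linarith) x y
    _ ≤ 2 * a * 1 * (β * min 1 (‖y‖ ^ 2)) := by
        gcongr
        exact min_one_mul_le_mul_min_one hβ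
    _ = 2 * a * β * min 1 (‖y‖ ^ 2) := by ring

end TruncGauss

section Sector

variable {n : ℕ}

lemma norm_sq_le_mul_of_forall_sq_le {x : Eucl n} {b : ℝ} (hx : ∀ i, x i ^ 2 ≤ b) :
    ‖x‖ ^ 2 ≤ n * b := by
  rw [EuclideanSpace.norm_sq_eq]
  simpa [Real.norm_eq_abs, sq_abs] using Finset.sum_le_card_nsmul Finset.univ _ b (fun i _ => hx i)

def sector (n : ℕ) (w : Eucl n) : Set (Eucl n) :=
  {y | ‖w‖ ^ 2 * ‖y‖ ^ 2 ≤ n * ⟪w, y⟫ ^ 2}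

lemma measurableSet_sector (w : Eucl n) : MeasurableSet (sector n w) :=
  measurableSet_le (by fun_prop) (by fun_prop)

lemma sector_smul {c : ℝ} (hc : c ≠ 0) (w : Eucl n) : sector n (c • w) = sector n w := by
  ext y
  simp only [sector, mem_ofPred_eq, norm_smul, real_inner_smul_left, mul_pow, Real.norm_eq_abs,
    sq_abs]
  rw [mul_assoc, mul_left_comm (n : ℝ), mul_le_mul_iff_of_pos_left (by positivity)]

lemma preimage_sector (T : Eucl n ≃ₗᵢ[ℝ] Eucl n) (w : Eucl n) :
    T ⁻¹' sector n (T w) = sector n w := by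
  ext y
  simp [sector, T.norm_map, T.inner_map_map]

lemma iUnion_sector_single [Nonempty (Fin n)] :
    ⋃ i, sector n (EuclideanSpace.single i 1) = univ := by
  refine eq_univ_of_forall fun y => mem_iUnion.2 ?_
  obtain ⟨i, -, hi⟩ := Finset.exists_max_image Finset.univ (fun i => y i ^ 2) Finset.univ_nonempty
  refine ⟨i, ?_⟩
  simpa [sector, EuclideanSpace.inner_single_left] using
    norm_sq_le_mul_of_forall_sq_le fun j => hi j (Finset.mem_univ j)

lemma setLIntegral_sector_congr (F : ℝ → ℝ≥0∞) {u v : Eucl n} (hu : u ≠ 0) (hv : v ≠ 0) :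
    ∫⁻ y in sector n u, F ‖y‖ = ∫⁻ y in sector n v, F ‖y‖ := by
  let T : Eucl n ≃ₗᵢ[ℝ] Eucl n := Submodule.reflection (ℝ ∙ (‖v‖ • u - ‖u‖ • v))ᗮ
  have hT : T (‖v‖ • u) = ‖u‖ • v := Submodule.reflection_sub (by simp [norm_smul, mul_comm])
  have hpre : T ⁻¹' sector n v = sector n u := by
    rw [← sector_smul (norm_ne_zero_iff.2 hu) v, ← hT, preimage_sector,
      sector_smul (norm_ne_zero_iff.2 hv)]
  calc ∫⁻ y in sector n u, F ‖y‖ = ∫⁻ y in T ⁻¹' sector n v, F ‖T y‖ := by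
        simp only [hpre, LinearIsometryEquiv.norm_map]
    _ = ∫⁻ y in sector n v, F ‖y‖ :=
        T.measurePreserving.setLIntegral_comp_preimage_emb
          T.toMeasurableEquiv.measurableEmbedding (fun z => F ‖z‖) _

lemma lintegral_le_mul_setLIntegral_sector (F : ℝ → ℝ≥0∞) {x : Eucl n} (hx : x ≠ 0) :
    ∫⁻ y : Eucl n, F ‖y‖ ≤ n * ∫⁻ y in sector n x, F ‖y‖ := by
  have : Nonempty (Fin n) := by
    by_contra h
    exact hx (by ext i; exact (not_nonempty_iff.1 h).elim i)
  calc ∫⁻ y, F ‖y‖ = ∫⁻ y in ⋃ i, sector n (EuclideanSpace.single i 1), F ‖y‖ := by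
        rw [iUnion_sector_single, Measure.restrict_univ]
    _ ≤ ∑' i, ∫⁻ y in sector n (EuclideanSpace.single i 1), F ‖y‖ := lintegral_iUnion_le _ _
    _ = ∑ _i : Fin n, ∫⁻ y in sector n x, F ‖y‖ := by
        rw [tsum_fintype]
        exact Finset.sum_congr rfl fun i _ =>
          setLIntegral_sector_congr F (u := EuclideanSpace.single i 1) (by simp) hx
    _ = n * ∫⁻ y in sector n x, F ‖y‖ := by simp

lemma sq_norm_le_of_mem_sector {x y : Eucl n} (hx : 1 / 4 < ‖x‖) (hy : y ∈ sector n x)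
    (hys : 16 * n * ‖y‖ ^ 2 < 1) :
    ‖y‖ ^ 2 ≤ 16 * n * ⟪x, y⟫ ^ 2 ∧ ‖y‖ ^ 2 ≤ |⟪x, y⟫| := by
  have h₁ : ‖y‖ ^ 2 ≤ 16 * n * ⟪x, y⟫ ^ 2 := by
    have : 1 / 16 < ‖x‖ ^ 2 := by nlinarith
    nlinarith [sq_nonneg ‖y‖, hy.out]
  refine ⟨h₁, (sq_le_sq₀ (by positivity) (abs_nonneg _)).1 ?_⟩
  rw [sq_abs]
  nlinarith [mul_le_mul_of_nonneg_left h₁ (sq_nonneg ‖y‖),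
    mul_le_mul_of_nonneg_left hys.le (sq_nonneg ⟪x, y⟫)]

end Sector

lemma CondA1.integral_eq_one {n : ℕ} {ν : Eucl n → ℝ → ℝ} (hA1 : CondA1 n ν) (x : Eucl n) :
    ∫ y : Eucl n, min 1 (‖y‖ ^ 2) * ν x ‖y‖ = 1 := by
  simpa [hfun] using hA1 x

lemma CondA3.rpow_le_mul_integral {n : ℕ} {ν : Eucl n → ℝ → ℝ} {cU α τ : ℝ}
    (hA1 : CondA1 n ν) (hA3 : CondA3 n ν cU α) (x : Eucl n) (hτ : 1 ≤ τ) :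
    τ ^ α ≤ cU * ∫ y : Eucl n, min 1 (τ ^ 2 * ‖y‖ ^ 2) * ν x ‖y‖ := by
  have hτ₀ : 0 < τ := by linarith
  have h := hA3 x τ⁻¹ τ (inv_pos.2 hτ₀) hτ
  have hh : hfun n ν x τ⁻¹ = ∫ y : Eucl n, min 1 (τ ^ 2 * ‖y‖ ^ 2) * ν x ‖y‖ := by
    simp only [hfun, inv_pow, div_inv_eq_mul, mul_comm _ (τ ^ 2)]
  rw [mul_inv_cancel₀ hτ₀.ne', hA1 x, hh, rpow_neg hτ₀.le] at h
  have hpos : 0 < τ ^ α := rpow_pos_of_pos hτ₀ α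
  calc τ ^ α ≤ τ ^ α * (cU * (τ ^ α)⁻¹ * ∫ y : Eucl n, min 1 (τ ^ 2 * ‖y‖ ^ 2) * ν x ‖y‖) :=
        le_mul_of_one_le_right hpos.le h
    _ = cU * ∫ y : Eucl n, min 1 (τ ^ 2 * ‖y‖ ^ 2) * ν x ‖y‖ := by field_simp

namespace KernelOK

variable {n : ℕ} [NeZero n] {ν : Eucl n → ℝ → ℝ}

lemma ae_nonneg (hν : KernelOK n ν) (x : Eucl n) : ∀ᵐ y : Eucl n, 0 ≤ ν x ‖y‖ := by
  filter_upwards [volume.ae_ne (0 : Eucl n)] with y hy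
  exact hν.2.1 x ‖y‖ (norm_pos_iff.2 hy)

lemma integrable_mul_of_le (hν : KernelOK n ν) (x : Eucl n) {g : Eucl n → ℝ} {C : ℝ}
    (hg : Continuous g) (hg0 : ∀ y, 0 ≤ g y) (hgC : ∀ y, g y ≤ C * min 1 (‖y‖ ^ 2)) :
    Integrable fun y => g y * ν x ‖y‖ := by
  have hνx : Measurable fun y : Eucl n => ν x ‖y‖ :=
    hν.1.comp (measurable_const.prodMk measurable_norm)
  refine ((hν.2.2 x).const_mul C).mono' (hg.measurable.mul hνx).aestronglyMeasurable ?_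
  filter_upwards [hν.ae_nonneg x] with y hy
  rw [norm_mul, Real.norm_of_nonneg (hg0 y), Real.norm_of_nonneg hy, ← mul_assoc]
  exact mul_le_mul_of_nonneg_right (hgC y) hy

lemma integrable_min_mul (hν : KernelOK n ν) (x : Eucl n) {β : ℝ} (hβ : 1 ≤ β) :
    Integrable fun y : Eucl n => min 1 (β * ‖y‖ ^ 2) * ν x ‖y‖ :=
  hν.integrable_mul_of_le x (by fun_prop) (fun y => le_min zero_le_one (by positivity))
    (fun y => min_one_mul_le_mul_min_one hβ)

lemma ofReal_setIntegral_eq_lintegral_indicator (hν : KernelOK n ν) (x : Eucl n) {β : ℝ}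
    (hβ : 1 ≤ β) :
    ENNReal.ofReal (∫ y in {y : Eucl n | 16 * n * ‖y‖ ^ 2 < 1}, min 1 (β * ‖y‖ ^ 2) * ν x ‖y‖) =
      ∫⁻ y : Eucl n, {r : ℝ | 16 * n * r ^ 2 < 1}.indicator
        (fun r => ENNReal.ofReal (min 1 (β * r ^ 2) * ν x r)) ‖y‖ := by
  rw [ofReal_integral_eq_lintegral_ofReal, ← lintegral_indicator
    (measurableSet_lt (by fun_prop) (by fun_prop))]
  · rfl
  · exact (hν.integrable_min_mul x hβ).integrableOn
  · refine ae_restrict_of_ae ?_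
    filter_upwards [hν.ae_nonneg x] with y hy
    exact mul_nonneg (le_min zero_le_one (by positivity)) hy

lemma integral_mul_le (hν : KernelOK n ν) (hA1 : CondA1 n ν) (x : Eucl n) {g : Eucl n → ℝ}
    {C : ℝ} (hg : Continuous g) (hg0 : ∀ y, 0 ≤ g y) (hgC : ∀ y, g y ≤ C * min 1 (‖y‖ ^ 2)) :
    ∫ y : Eucl n, g y * ν x ‖y‖ ≤ C := by
  calc ∫ y : Eucl n, g y * ν x ‖y‖ ≤ ∫ y : Eucl n, C * (min 1 (‖y‖ ^ 2) * ν x ‖y‖) := by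
        refine integral_mono_ae (hν.integrable_mul_of_le x hg hg0 hgC)
          ((hν.2.2 x).const_mul C) ?_
        filter_upwards [hν.ae_nonneg x] with y hy
        rw [← mul_assoc]
        exact mul_le_mul_of_nonneg_right (hgC y) hy
    _ = C := by rw [integral_const_mul, hA1.integral_eq_one, mul_one]

lemma integral_le_two_mul_setIntegral (hν : KernelOK n ν) (hA1 : CondA1 n ν) (x : Eucl n)
    {β : ℝ} (hβ : 1 ≤ β) (hmass : 32 * n ≤ ∫ y : Eucl n, min 1 (β * ‖y‖ ^ 2) * ν x ‖y‖) :
    ∫ y : Eucl n, min 1 (β * ‖y‖ ^ 2) * ν x ‖y‖ ≤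
      2 * ∫ y in {y : Eucl n | 16 * n * ‖y‖ ^ 2 < 1}, min 1 (β * ‖y‖ ^ 2) * ν x ‖y‖ := by
  have hS : MeasurableSet {y : Eucl n | 16 * n * ‖y‖ ^ 2 < 1} :=
    measurableSet_lt (by fun_prop) (by fun_prop)
  have hm := hν.integrable_min_mul x hβ
  have hk := (hν.2.2 x).const_mul (16 * n)
  have hn : (1 : ℝ) ≤ n := by exact_mod_cast NeZero.one_le
  have htail : ∫ y in {y : Eucl n | 16 * n * ‖y‖ ^ 2 < 1}ᶜ, min 1 (β * ‖y‖ ^ 2) * ν x ‖y‖ ≤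
      16 * n := by
    calc ∫ y in {y : Eucl n | 16 * n * ‖y‖ ^ 2 < 1}ᶜ, min 1 (β * ‖y‖ ^ 2) * ν x ‖y‖
        ≤ ∫ y in {y : Eucl n | 16 * n * ‖y‖ ^ 2 < 1}ᶜ, 16 * n * (min 1 (‖y‖ ^ 2) * ν x ‖y‖) := by
          refine setIntegral_mono_on hm.integrableOn hk.integrableOn hS.compl fun y hy => ?_
          simp only [mem_compl_iff, mem_ofPred_eq, not_lt] at hy
          have hν₀ : 0 ≤ ν x ‖y‖ := hν.2.1 x ‖y‖ (norm_pos_iff.2 fun h => by norm_num [h] at hy)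
          have h₁ : 1 ≤ 16 * n * min 1 (‖y‖ ^ 2) := by
            rw [mul_min_of_nonneg _ _ (by positivity), mul_one]
            exact le_min (by linarith) hy
          nlinarith [min_le_left 1 (β * ‖y‖ ^ 2)]
      _ ≤ ∫ y : Eucl n, 16 * n * (min 1 (‖y‖ ^ 2) * ν x ‖y‖) := by
          refine setIntegral_le_integral hk ?_
          filter_upwards [hν.ae_nonneg x] with y hy
          positivity
      _ = 16 * n := by rw [integral_const_mul, hA1.integral_eq_one, mul_one]
  linarith [integral_add_compl hS hm]

end KernelOK

/-- With `κ = 2nΛ/λ` and `C = 16n` in `Real.mul_min_one_le_exp_neg_mul_cosh_sub_one`: the factor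
`n` is what is lost by covering `ℝⁿ` with `n` sectors, the factor `2` what is lost by keeping only
the part `16n|y|² < 1` of the kernel. -/
def minBarrierExponent (n : ℕ) (lam Lam : ℝ) : ℝ :=
  8 * (16 * n) * (2 * n * Lam / lam + 1) ^ 2

section PucciEstimate

variable {n : ℕ} [NeZero n] {ν : Eucl n → ℝ → ℝ} {lam Lam a β c : ℝ}

lemma integrable_negPart_delta2_truncGauss (hν : KernelOK n ν) (hLam : 0 ≤ Lam) (ha : 0 ≤ a)
    (hβ : 1 ≤ β) (x : Eucl n) :
    Integrable fun y => Lam * max (-delta2 n (truncGauss n a β c) x y) 0 * ν x ‖y‖ :=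
  hν.integrable_mul_of_le x (C := Lam * (2 * a * β))
    (continuous_const.mul ((continuous_delta2 continuous_truncGauss x).neg.max continuous_const))
    (fun y => by positivity)
    (fun y => by
      rw [mul_assoc]
      exact mul_le_mul_of_nonneg_left (negPart_delta2_truncGauss_le_mul_min ha hβ x y) hLam)

lemma integral_negPart_delta2_truncGauss_le (hν : KernelOK n ν) (hA1 : CondA1 n ν)
    (hLam : 0 ≤ Lam) (ha : 0 ≤ a) (hβ : 1 ≤ β) (x : Eucl n) :
    ∫ y, Lam * max (-delta2 n (truncGauss n a β c) x y) 0 * ν x ‖y‖ ≤ Lam * (2 * a * β) :=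
  hν.integral_mul_le hA1 x
    (continuous_const.mul ((continuous_delta2 continuous_truncGauss x).neg.max continuous_const))
    (fun y => by positivity)
    (fun y => by
      rw [mul_assoc]
      exact mul_le_mul_of_nonneg_left (negPart_delta2_truncGauss_le_mul_min ha hβ x y) hLam)

lemma one_le_of_minBarrierExponent_le (hlam : 0 < lam) (hLam : 0 ≤ Lam)
    (hβ : minBarrierExponent n lam Lam ≤ β) : 1 ≤ β := by
  have hn : (1 : ℝ) ≤ n := by exact_mod_cast NeZero.one_le
  have hκ : 1 ≤ (2 * n * Lam / lam + 1) ^ 2 :=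
    one_le_pow₀ (by linarith [show 0 ≤ 2 * n * Lam / lam by positivity])
  rw [minBarrierExponent] at hβ
  nlinarith

variable {x : Eucl n}

lemma mul_min_le_posPart_delta2_truncGauss (hlam : 0 < lam) (hLam : 0 ≤ Lam) (ha : 0 ≤ a)
    (hβ : minBarrierExponent n lam Lam ≤ β) (hc : c ≤ exp (-(β * ‖x‖ ^ 2)))
    (hx : 1 / 4 < ‖x‖) {y : Eucl n} (hy : y ∈ sector n x) (hys : 16 * n * ‖y‖ ^ 2 < 1) :
    2 * a * exp (-(β * ‖x‖ ^ 2)) * (2 * n * Lam) * min 1 (β * ‖y‖ ^ 2) ≤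
      lam * max (delta2 n (truncGauss n a β c) x y) 0 := by
  obtain ⟨h₁, h₂⟩ := sq_norm_le_of_mem_sector hx hy hys
  have hn : (0 : ℝ) < n := Nat.cast_pos.2 (NeZero.pos n)
  have hE := mul_min_one_le_exp_neg_mul_cosh_sub_one (κ := 2 * n * Lam / lam) (β := β)
    (by positivity) (by positivity) hβ h₁ h₂
  have hK : 0 ≤ 2 * a * exp (-(β * ‖x‖ ^ 2)) := by positivity
  calc 2 * a * exp (-(β * ‖x‖ ^ 2)) * (2 * n * Lam) * min 1 (β * ‖y‖ ^ 2)
      = lam * (2 * a * exp (-(β * ‖x‖ ^ 2)) *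
          (2 * n * Lam / lam * min 1 (β * ‖y‖ ^ 2))) := by
        field_simp
    _ ≤ lam * delta2 n (truncGauss n a β c) x y :=
        mul_le_mul_of_nonneg_left
          ((mul_le_mul_of_nonneg_left hE hK).trans (le_delta2_truncGauss ha hc y)) hlam.le
    _ ≤ lam * max (delta2 n (truncGauss n a β c) x y) 0 :=
        mul_le_mul_of_nonneg_left (le_max_left _ _) hlam.le

lemma ofReal_mul_setIntegral_le_lintegral_posPart (hν : KernelOK n ν) (hlam : 0 < lam)
    (hLam : 0 ≤ Lam) (ha : 0 ≤ a) (hβ : minBarrierExponent n lam Lam ≤ β)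
    (hc : c ≤ exp (-(β * ‖x‖ ^ 2))) (hx : 1 / 4 < ‖x‖) :
    ENNReal.ofReal (2 * (2 * a * exp (-(β * ‖x‖ ^ 2))) * Lam *
        ∫ y in {y : Eucl n | 16 * n * ‖y‖ ^ 2 < 1}, min 1 (β * ‖y‖ ^ 2) * ν x ‖y‖) ≤
      ∫⁻ y, ENNReal.ofReal (lam * max (delta2 n (truncGauss n a β c) x y) 0 * ν x ‖y‖) := by
  set K := 2 * a * exp (-(β * ‖x‖ ^ 2))
  set S := {y : Eucl n | 16 * n * ‖y‖ ^ 2 < 1}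
  have hβ1 := one_le_of_minBarrierExponent_le hlam hLam hβ
  have hK : 0 ≤ 2 * K * Lam := by positivity
  let F : ℝ → ℝ≥0∞ :=
    {r : ℝ | 16 * n * r ^ 2 < 1}.indicator fun r => ENNReal.ofReal (min 1 (β * r ^ 2) * ν x r)
  have hF := hν.ofReal_setIntegral_eq_lintegral_indicator x hβ1
  have hpt : ∀ᵐ y ∂volume.restrict (sector n x),
      ENNReal.ofReal (2 * K * Lam) * (n * F ‖y‖) ≤
        ENNReal.ofReal (lam * max (delta2 n (truncGauss n a β c) x y) 0 * ν x ‖y‖) := by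
    filter_upwards [ae_restrict_mem (measurableSet_sector x),
      ae_restrict_of_ae (hν.ae_nonneg x)] with y hy hν₀
    by_cases hys : 16 * n * ‖y‖ ^ 2 < 1
    · have hFy : F ‖y‖ = ENNReal.ofReal (min 1 (β * ‖y‖ ^ 2) * ν x ‖y‖) := by
        simp [F, hys]
      rw [hFy, ← ENNReal.ofReal_natCast, ← ENNReal.ofReal_mul (by positivity),
        ← ENNReal.ofReal_mul hK]
      refine ENNReal.ofReal_le_ofReal ?_
      calc 2 * K * Lam * (n * (min 1 (β * ‖y‖ ^ 2) * ν x ‖y‖))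
          = K * (2 * n * Lam) * min 1 (β * ‖y‖ ^ 2) * ν x ‖y‖ := by ring
        _ ≤ lam * max (delta2 n (truncGauss n a β c) x y) 0 * ν x ‖y‖ :=
          mul_le_mul_of_nonneg_right
            (mul_min_le_posPart_delta2_truncGauss hlam hLam ha hβ hc hx hy hys) hν₀
    · simp [F, hys]
  calc ENNReal.ofReal (2 * K * Lam * ∫ y in S, min 1 (β * ‖y‖ ^ 2) * ν x ‖y‖)
      = ENNReal.ofReal (2 * K * Lam) * ∫⁻ y : Eucl n, F ‖y‖ := by rw [ENNReal.ofReal_mul hK, hF]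
    _ ≤ ENNReal.ofReal (2 * K * Lam) * (n * ∫⁻ y in sector n x, F ‖y‖) := by
        gcongr
        exact lintegral_le_mul_setLIntegral_sector F (by rintro rfl; norm_num at hx)
    _ ≤ ∫⁻ y in sector n x, ENNReal.ofReal (2 * K * Lam) * (n * F ‖y‖) := by
        grw [← lintegral_const_mul_le, ← lintegral_const_mul_le]
    _ ≤ ∫⁻ y in sector n x,
          ENNReal.ofReal (lam * max (delta2 n (truncGauss n a β c) x y) 0 * ν x ‖y‖) :=
        lintegral_mono_ae hpt
    _ ≤ ∫⁻ y, ENNReal.ofReal (lam * max (delta2 n (truncGauss n a β c) x y) 0 * ν x ‖y‖) :=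
        setLIntegral_le_lintegral _ _

lemma ofReal_integral_negPart_le_lintegral_posPart (hν : KernelOK n ν) (hA1 : CondA1 n ν)
    (hlam : 0 < lam) (hLam : 0 ≤ Lam) (ha : 0 ≤ a)
    (hβ : minBarrierExponent n lam Lam ≤ β) (hx : 1 / 4 < ‖x‖)
    (hmass : 32 * n ≤ ∫ y : Eucl n, min 1 (β * ‖y‖ ^ 2) * ν x ‖y‖) :
    ENNReal.ofReal (∫ y, Lam * max (-delta2 n (truncGauss n a β c) x y) 0 * ν x ‖y‖) ≤
      ∫⁻ y, ENNReal.ofReal (lam * max (delta2 n (truncGauss n a β c) x y) 0 * ν x ‖y‖) := by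
  rcases lt_or_ge (exp (-(β * ‖x‖ ^ 2))) c with hc | hc
  · simp [max_eq_right (neg_nonpos.2 (delta2_truncGauss_nonneg ha hc.le _))]
  have hβ1 := one_le_of_minBarrierExponent_le hlam hLam hβ
  set K := 2 * a * exp (-(β * ‖x‖ ^ 2))
  have hneg : ∫ y, Lam * max (-delta2 n (truncGauss n a β c) x y) 0 * ν x ‖y‖ ≤
      K * Lam * ∫ y : Eucl n, min 1 (β * ‖y‖ ^ 2) * ν x ‖y‖ := by
    rw [← integral_const_mul]
    refine integral_mono_ae (integrable_negPart_delta2_truncGauss hν hLam ha hβ1 x)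
      ((hν.integrable_min_mul x hβ1).const_mul _) ?_
    filter_upwards [hν.ae_nonneg x] with y hy
    calc Lam * max (-delta2 n (truncGauss n a β c) x y) 0 * ν x ‖y‖
        ≤ Lam * (K * min 1 (β * ‖y‖ ^ 2)) * ν x ‖y‖ := by
          gcongr
          exact negPart_delta2_truncGauss_le ha (by linarith) x y
      _ = K * Lam * (min 1 (β * ‖y‖ ^ 2) * ν x ‖y‖) := by ring
  calc ENNReal.ofReal (∫ y, Lam * max (-delta2 n (truncGauss n a β c) x y) 0 * ν x ‖y‖)
      ≤ ENNReal.ofReal (2 * K * Lam *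
          ∫ y in {y : Eucl n | 16 * n * ‖y‖ ^ 2 < 1}, min 1 (β * ‖y‖ ^ 2) * ν x ‖y‖) := by
        refine ENNReal.ofReal_le_ofReal (hneg.trans ?_)
        have := hν.integral_le_two_mul_setIntegral hA1 x hβ1 hmass
        have hK : 0 ≤ K * Lam := by positivity
        nlinarith
    _ ≤ _ := ofReal_mul_setIntegral_le_lintegral_posPart hν hlam hLam ha hβ hc hx

end PucciEstimate

/-- Normalised so that the barrier is `2` on the ball of radius `3√n/2`, which contains `𝒬₃`;
the truncation at `e^{-4nβ}` makes it vanish outside `B_{2√n}`. -/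
def barrierHeight (n : ℕ) (β : ℝ) : ℝ :=
  2 / (exp (-(β * (9 * n / 4))) - exp (-(β * (4 * n))))

def barrier (n : ℕ) (β : ℝ) : Eucl n → ℝ :=
  truncGauss n (barrierHeight n β) β (exp (-(β * (4 * n))))

section Barrier

variable {n : ℕ} {β : ℝ}

lemma barrierHeight_denom_pos [NeZero n] (hβ : 0 < β) :
    0 < exp (-(β * (9 * n / 4))) - exp (-(β * (4 * n))) := by
  have hn : (0 : ℝ) < n := Nat.cast_pos.2 (NeZero.pos n)
  exact sub_pos.2 (exp_lt_exp.2 (by nlinarith))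

lemma barrierHeight_pos [NeZero n] (hβ : 0 < β) : 0 < barrierHeight n β :=
  div_pos two_pos (barrierHeight_denom_pos hβ)

lemma barrier_eq_zero (hβ : 0 ≤ β) {z : Eucl n} (hz : z ∉ ball (0 : Eucl n) (2 * √n)) :
    barrier n β z = 0 := by
  refine truncGauss_eq_zero (exp_le_exp.2 (neg_le_neg (mul_le_mul_of_nonneg_left ?_ hβ)))
  have h : 2 * √n ≤ ‖z‖ := by simpa using hz
  calc (4 * n : ℝ) = (2 * √n) ^ 2 := by rw [mul_pow, sq_sqrt (Nat.cast_nonneg n)]; norm_num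
    _ ≤ ‖z‖ ^ 2 := pow_le_pow_left₀ (by positivity) h 2

lemma two_le_barrier [NeZero n] (hβ : 0 < β) {z : Eucl n} (hz : z ∈ cube n 0 3) :
    2 ≤ barrier n β z := by
  have hz' : ‖z‖ ^ 2 ≤ 9 * n / 4 := by
    have := norm_sq_le_mul_of_forall_sq_le (x := z) (b := 9 / 4) fun i => by
      have h : |z i| < 3 / 2 := by simpa using hz i
      nlinarith [sq_abs (z i), abs_nonneg (z i)]
    linarith
  have hG : exp (-(β * (9 * n / 4))) ≤ exp (-(β * ‖z‖ ^ 2)) :=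
    exp_le_exp.2 (neg_le_neg (mul_le_mul_of_nonneg_left hz' hβ.le))
  calc (2 : ℝ) = barrierHeight n β * (exp (-(β * (9 * n / 4))) - exp (-(β * (4 * n)))) := by
        rw [barrierHeight, div_mul_cancel₀ _ (barrierHeight_denom_pos hβ).ne']
    _ ≤ barrier n β z := by
        rw [barrier, truncGauss]
        exact mul_le_mul_of_nonneg_left (le_max_of_le_left (by linarith))
          (barrierHeight_pos hβ).le

end Barrier

/-- **Corollary 4.2** (barrier function `Φ`). -/
theorem barrier_corollary (n : ℕ) (hn : 1 ≤ n) (lam Lam cU α : ℝ)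
    (hlam : 0 < lam) (hlamLam : lam ≤ Lam) (hcU : 0 < cU) (hα : 0 < α) :
    ∃ Φ ψ : Eucl n → ℝ,
      IsBdd n Φ ∧ (∀ x, 0 ≤ Φ x) ∧ IsBdd n ψ ∧ (∀ x, 0 ≤ ψ x) ∧
      (∀ x : Eucl n, x ∉ Metric.closedBall (0 : Eucl n) (1 / 4) → ψ x = 0) ∧
      ∀ ν : Eucl n → ℝ → ℝ, KernelOK n ν → CondA n ν cU α →
        (∀ x : Eucl n, x ∉ Metric.ball (0 : Eucl n) (2 * Real.sqrt n) → Φ x = 0) ∧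
        (∀ x ∈ cube n 0 3, 2 ≤ Φ x) ∧
        (∀ x : Eucl n,
          Integrable (fun y : Eucl n => Lam * max (-delta2 n Φ x y) 0 * ν x ‖y‖) ∧
          ENNReal.ofReal ((∫ y : Eucl n, Lam * max (-delta2 n Φ x y) 0 * ν x ‖y‖) - ψ x) ≤
            ∫⁻ y : Eucl n, ENNReal.ofReal (lam * max (delta2 n Φ x y) 0 * ν x ‖y‖)) := by
  have : NeZero n := ⟨by omega⟩
  have hLam : 0 ≤ Lam := hlam.le.trans hlamLam
  obtain ⟨τ, hτ1, hτβ, hτα⟩ : ∃ τ : ℝ, 1 ≤ τ ∧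
      minBarrierExponent n lam Lam ≤ τ ^ 2 ∧ 32 * n * cU ≤ τ ^ α :=
    ((Filter.eventually_ge_atTop 1).and <|
      ((Filter.tendsto_pow_atTop two_ne_zero).eventually_ge_atTop _).and
        ((tendsto_rpow_atTop hα).eventually_ge_atTop _)).exists
  have hβ : 1 ≤ τ ^ 2 := one_le_pow₀ hτ1
  have ha := barrierHeight_pos (n := n) (zero_lt_one.trans_le hβ)
  set C := Lam * (2 * barrierHeight n (τ ^ 2) * τ ^ 2)
  have hC : 0 ≤ C := by positivity
  refine ⟨barrier n (τ ^ 2), (closedBall 0 (1 / 4)).indicator fun _ => C,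
    ⟨barrierHeight n (τ ^ 2), fun z => ?_⟩, truncGauss_nonneg ha.le,
    ⟨C, fun z => ?_⟩, indicator_nonneg fun _ _ => hC, fun z hz => indicator_of_notMem hz _,
    fun ν hν hA => ⟨fun z hz => barrier_eq_zero (by positivity) hz,
      fun z hz => two_le_barrier (by positivity) hz,
      fun x => ⟨integrable_negPart_delta2_truncGauss hν hLam ha.le hβ x, ?_⟩⟩⟩
  · exact (abs_of_nonneg (truncGauss_nonneg ha.le z)).trans_le
      (truncGauss_le ha.le (by positivity) (exp_pos _).le z)
  · rw [abs_of_nonneg (indicator_nonneg (fun _ _ => hC) z)]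
    exact indicator_le_self' (fun _ _ => hC) z
  by_cases hx : x ∈ closedBall (0 : Eucl n) (1 / 4)
  · rw [indicator_of_mem hx]
    exact (ENNReal.ofReal_eq_zero.2 (sub_nonpos.2
      (integral_negPart_delta2_truncGauss_le hν hA.1 hLam ha.le hβ x))).trans_le zero_le
  rw [indicator_of_notMem hx, sub_zero]
  refine ofReal_integral_negPart_le_lintegral_posPart hν hA.1 hlam hLam ha.le hτβ
    (by simpa using hx) (le_of_mul_le_mul_left ?_ hcU)
  linarith [hA.2.2.rpow_le_mul_integral hA.1 x hτ1]
end
end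

section
/- Let ρ₀ > 0 be the exponent from the point-to-measure estimate. For every ρ₁ ∈ (0, ρ₀) there exists a constant C > 0 depending only on n, λ, Λ, c_U, α and ρ₁ with the following property (weak Harnack inequality). Let ν satisfy condition (A), let R > 0, let f : B_{2√n R} → ℝ be bounded, and let u ∈ C(B_{2√n R}) ∩ L^∞(ℝⁿ) be nonnegative on all of ℝⁿ and a viscosity supersolution of M⁻_ν u = |f| in B_{2√n R}. Then ( |𝒬_R|^{−1} ∫_{𝒬_R} u^{ρ₁} dx )^{1/ρ₁} ≤ C ( inf_{𝒬_{3R}} u + sup_{x∈B_{2√n R}} |f(x)|/h(x,R) ). -/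
open MeasureTheory Metric Set
open scoped ENNReal

noncomputable section

/-!
The point-to-measure estimate says that the distribution function of `u` on `𝒬_R` decays like
`C₀ (A / t)^ρ₀`, where `A` is the right-hand side of the weak Harnack inequality. For `ρ₁ < ρ₀`
the layer-cake formula `∫ u^ρ₁ = ρ₁ ∫₀^∞ t^(ρ₁-1) |{u > t}| dt`, with the trivial bound
`|{u > t}| ≤ |𝒬_R|` for `t ≤ A` and the decay bound for `t > A`, then gives
`⨍_{𝒬_R} u^ρ₁ ≤ (1 + ρ₁ C₀ / (ρ₀ - ρ₁)) A^ρ₁`.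
-/

section LayerCake

variable {α : Type*} [MeasurableSpace α] {μ : Measure α} {f : α → ℝ} {p q C A : ℝ}

theorem lintegral_Ioc_ofReal_rpow_sub_one (hq : 0 < q) (hA : 0 ≤ A) :
    ∫⁻ t in Ioc 0 A, ENNReal.ofReal (t ^ (q - 1)) = ENNReal.ofReal (A ^ q / q) := by
  have hint : IntegrableOn (fun t : ℝ => t ^ (q - 1)) (Ioc 0 A) := by
    rw [← intervalIntegrable_iff_integrableOn_Ioc_of_le hA]
    exact intervalIntegral.intervalIntegrable_rpow' (by linarith)
  rw [← ofReal_integral_eq_lintegral_ofReal hint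
    ((ae_restrict_iff' measurableSet_Ioc).2 (ae_of_all _ fun t ht => Real.rpow_nonneg ht.1.le _)),
    ← intervalIntegral.integral_of_le hA, integral_rpow (Or.inl (by linarith)), sub_add_cancel,
    Real.zero_rpow hq.ne', sub_zero]

theorem lintegral_Ioi_ofReal_rpow_sub_one {s : ℝ} (hs : s < 0) (hA : 0 < A) :
    ∫⁻ t in Ioi A, ENNReal.ofReal (t ^ (s - 1)) = ENNReal.ofReal (A ^ s / -s) := by
  rw [← ofReal_integral_eq_lintegral_ofReal (integrableOn_Ioi_rpow_of_lt (by linarith) hA)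
    ((ae_restrict_iff' measurableSet_Ioi).2
      (ae_of_all _ fun t ht => Real.rpow_nonneg (hA.trans ht).le _)),
    integral_Ioi_rpow_of_lt (by linarith) hA, sub_add_cancel, div_neg, neg_div]

variable (hf0 : 0 ≤ᵐ[μ] f) (hfm : AEMeasurable f μ) (hC : 0 ≤ C) (hq : 0 < q) (hqp : q < p)
  (hdist : ∀ t, 0 < t → μ {x | t < f x} ≤ ENNReal.ofReal (C * A ^ p * t ^ (-p)) * μ univ)
include hf0 hfm hC hq hqp hdist

theorem lintegral_rpow_le_of_meas_lt_le_of_pos (hA : 0 < A) :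
    ∫⁻ x, ENNReal.ofReal (f x ^ q) ∂μ ≤
      μ univ * ENNReal.ofReal ((1 + q * C / (p - q)) * A ^ q) := by
  have hmeas : ∀ c : ℝ, Measurable fun t : ℝ => ENNReal.ofReal (t ^ c) :=
    fun c => (measurable_id.pow_const c).ennreal_ofReal
  set F : ℝ → ℝ≥0∞ := fun t => μ {x | t < f x} * ENNReal.ofReal (t ^ (q - 1))
  have hlow : ∫⁻ t in Ioc 0 A, F t ≤ μ univ * ENNReal.ofReal (A ^ q / q) := by
    rw [← lintegral_Ioc_ofReal_rpow_sub_one hq hA.le, ← lintegral_const_mul _ (hmeas _)]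
    exact setLIntegral_mono (measurable_const.mul (hmeas _))
      fun t _ => mul_le_mul_left (measure_mono (subset_univ _)) _
  have hhigh : ∫⁻ t in Ioi A, F t ≤
      μ univ * (ENNReal.ofReal (C * A ^ p) * ENNReal.ofReal (A ^ (q - p) / (p - q))) := by
    have htail := lintegral_Ioi_ofReal_rpow_sub_one (s := q - p) (by linarith) hA
    rw [neg_sub] at htail
    rw [← htail, ← mul_assoc, ← lintegral_const_mul _ (hmeas _)]
    refine setLIntegral_mono (measurable_const.mul (hmeas _)) fun t ht => ?_
    have ht0 : 0 < t := hA.trans ht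
    calc F t ≤ ENNReal.ofReal (C * A ^ p * t ^ (-p)) * μ univ * ENNReal.ofReal (t ^ (q - 1)) :=
          mul_le_mul_left (hdist t ht0) _
      _ = μ univ * ENNReal.ofReal (C * A ^ p) * ENNReal.ofReal (t ^ (q - p - 1)) := by
          rw [ENNReal.ofReal_mul (by positivity : 0 ≤ C * A ^ p),
            show q - p - 1 = -p + (q - 1) by ring, Real.rpow_add ht0,
            ENNReal.ofReal_mul (Real.rpow_nonneg ht0.le _)]
          ring
  have hK : q * (A ^ q / q + C * A ^ p * (A ^ (q - p) / (p - q))) =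
      (1 + q * C / (p - q)) * A ^ q := by
    have hpow : A ^ p * A ^ (q - p) = A ^ q := by rw [← Real.rpow_add hA, add_sub_cancel]
    have : p - q ≠ 0 := by linarith
    rw [← hpow]
    field_simp
  rw [lintegral_rpow_eq_lintegral_meas_lt_mul μ hf0 hfm hq, ← Ioc_union_Ioi_eq_Ioi hA.le,
    lintegral_union measurableSet_Ioi (Ioc_disjoint_Ioi le_rfl)]
  calc _ ≤ ENNReal.ofReal q * (μ univ * ENNReal.ofReal (A ^ q / q) +
          μ univ * (ENNReal.ofReal (C * A ^ p) * ENNReal.ofReal (A ^ (q - p) / (p - q)))) := by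
        gcongr
    _ = μ univ * ENNReal.ofReal ((1 + q * C / (p - q)) * A ^ q) := by
        have hpq : 0 < p - q := by linarith
        rw [← hK, ← ENNReal.ofReal_mul (by positivity), ← mul_add,
          ← ENNReal.ofReal_add (by positivity) (by positivity), ENNReal.ofReal_mul hq.le]
        ring

theorem lintegral_rpow_le_of_meas_lt_le (hA : 0 ≤ A) :
    ∫⁻ x, ENNReal.ofReal (f x ^ q) ∂μ ≤
      μ univ * ENNReal.ofReal ((1 + q * C / (p - q)) * A ^ q) := by
  rcases hA.lt_or_eq with hA | rfl
  · exact lintegral_rpow_le_of_meas_lt_le_of_pos hf0 hfm hC hq hqp hdist hA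
  have hnull : ∀ t ∈ Ioi (0 : ℝ), μ {x | t < f x} * ENNReal.ofReal (t ^ (q - 1)) = 0 := by
    intro t ht
    have := hdist t ht
    rw [Real.zero_rpow (by linarith), mul_zero, zero_mul, ENNReal.ofReal_zero, zero_mul,
      nonpos_iff_eq_zero] at this
    rw [this, zero_mul]
  rw [lintegral_rpow_eq_lintegral_meas_lt_mul μ hf0 hfm hq,
    setLIntegral_congr_fun measurableSet_Ioi hnull]
  simp

theorem average_rpow_le_of_meas_lt_le [IsFiniteMeasure μ] (hA : 0 ≤ A) :
    ((μ univ).toReal⁻¹ * ∫ x, f x ^ q ∂μ) ^ (1 / q) ≤ (1 + q * C / (p - q)) ^ (1 / q) * A := by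
  have hpq : 0 < p - q := by linarith
  set K := 1 + q * C / (p - q)
  have hK : 0 < K := by positivity
  have hint : ∫ x, f x ^ q ∂μ ≤ (μ univ).toReal * (K * A ^ q) := by
    rw [integral_eq_lintegral_of_nonneg_ae (hf0.mono fun x hx => Real.rpow_nonneg hx q)
      (hfm.pow_const q).aestronglyMeasurable]
    calc _ ≤ (μ univ * ENNReal.ofReal (K * A ^ q)).toReal :=
          ENNReal.toReal_mono (by finiteness)
            (lintegral_rpow_le_of_meas_lt_le hf0 hfm hC hq hqp hdist hA)
      _ = (μ univ).toReal * (K * A ^ q) := by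
          rw [ENNReal.toReal_mul, ENNReal.toReal_ofReal (by positivity)]
  have havg : (μ univ).toReal⁻¹ * ∫ x, f x ^ q ∂μ ≤ K * A ^ q := by
    rcases (ENNReal.toReal_nonneg (a := μ univ)).eq_or_lt with hμ | hμ
    · rw [← hμ, inv_zero, zero_mul]; positivity
    · rwa [inv_mul_le_iff₀ hμ]
  have hint0 : 0 ≤ ∫ x, f x ^ q ∂μ :=
    integral_nonneg_of_ae (hf0.mono fun x hx => Real.rpow_nonneg hx q)
  calc _ ≤ (K * A ^ q) ^ (1 / q) := Real.rpow_le_rpow (by positivity) havg (by positivity)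
    _ = K ^ (1 / q) * A := by
        rw [Real.mul_rpow hK.le (by positivity), ← Real.rpow_mul hA, mul_one_div_cancel hq.ne',
          Real.rpow_one]

end LayerCake

theorem isOpen_cube (n : ℕ) (x : Eucl n) (l : ℝ) : IsOpen (cube n x l) := by
  simp only [cube, ofPred_forall]
  exact isOpen_iInter_of_finite fun i => isOpen_lt (by fun_prop) continuous_const

theorem cube_subset_closedBall (n : ℕ) (x : Eucl n) {l : ℝ} (hl : 0 ≤ l) :
    cube n x l ⊆ closedBall x (Real.sqrt n * (l / 2)) := by
  intro y hy
  rw [mem_closedBall, EuclideanSpace.dist_eq]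
  calc Real.sqrt (∑ i, dist (y i) (x i) ^ 2) ≤ Real.sqrt (∑ _i : Fin n, (l / 2) ^ 2) := by
        gcongr with i
        exact (hy i).le
    _ = Real.sqrt n * (l / 2) := by
        rw [Finset.sum_const, Finset.card_univ, Fintype.card_fin, nsmul_eq_mul,
          Real.sqrt_mul (Nat.cast_nonneg n), Real.sqrt_sq (by linarith)]

theorem cube_subset_ball {n : ℕ} (hn : 1 ≤ n) {R : ℝ} (hR : 0 < R) :
    cube n 0 R ⊆ ball 0 (2 * Real.sqrt n * R) := by
  have hsqrt : 0 < Real.sqrt n := Real.sqrt_pos.2 (by exact_mod_cast hn)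
  exact (cube_subset_closedBall n 0 hR.le).trans (closedBall_subset_ball (by nlinarith))

theorem hfun_nonneg {n : ℕ} {ν : Eucl n → ℝ → ℝ} (hν : ∀ x r, 0 < r → 0 ≤ ν x r)
    (x : Eucl n) (r : ℝ) : 0 ≤ hfun n ν x r := by
  refine integral_nonneg fun y => ?_
  rcases eq_or_ne y 0 with rfl | hy
  · simp
  · exact mul_nonneg (le_min zero_le_one (by positivity)) (hν x _ (norm_pos_iff.2 hy))

theorem weak_harnack_general (n : ℕ) (hn : 1 ≤ n) (lam Lam cU α : ℝ)
    (C₀ ρ₀ : ℝ) (hC₀ : 0 < C₀)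
    (hPTM : ∀ ν : Eucl n → ℝ → ℝ, KernelOK n ν → CondA n ν cU α →
      ∀ R : ℝ, 0 < R →
        ∀ f u : Eucl n → ℝ, IsBdd n f → IsBdd n u →
          ContinuousOn u (Metric.ball (0 : Eucl n) (2 * Real.sqrt n * R)) →
          (∀ x, 0 ≤ u x) →
          IsViscositySupersol n lam Lam ν u (fun x => |f x|)
            (Metric.ball (0 : Eucl n) (2 * Real.sqrt n * R)) →
          ∀ t : ℝ, 0 < t →
            volume {x ∈ cube n (0 : Eucl n) R | t < u x} ≤
              ENNReal.ofReal (C₀ * (sInf (u '' cube n 0 (3 * R)) +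
                  sSup ((fun x => |f x| / hfun n ν x R) ''
                    Metric.ball (0 : Eucl n) (2 * Real.sqrt n * R))) ^ ρ₀ * t ^ (-ρ₀)) *
                volume (cube n (0 : Eucl n) R)) :
    ∀ ρ₁ ∈ Set.Ioo (0 : ℝ) ρ₀, ∃ C : ℝ, 0 < C ∧
      ∀ ν : Eucl n → ℝ → ℝ, KernelOK n ν → CondA n ν cU α →
        ∀ R : ℝ, 0 < R →
          ∀ f u : Eucl n → ℝ, IsBdd n f → IsBdd n u →
            ContinuousOn u (Metric.ball (0 : Eucl n) (2 * Real.sqrt n * R)) →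
            (∀ x, 0 ≤ u x) →
            IsViscositySupersol n lam Lam ν u (fun x => |f x|)
              (Metric.ball (0 : Eucl n) (2 * Real.sqrt n * R)) →
            ((volume (cube n (0 : Eucl n) R)).toReal⁻¹ *
                ∫ x in cube n (0 : Eucl n) R, u x ^ ρ₁) ^ (1 / ρ₁) ≤
              C * (sInf (u '' cube n 0 (3 * R)) +
                sSup ((fun x => |f x| / hfun n ν x R) ''
                  Metric.ball (0 : Eucl n) (2 * Real.sqrt n * R))) := by
  intro ρ₁ ⟨hρ₁, hρ₁ρ₀⟩
  refine ⟨(1 + ρ₁ * C₀ / (ρ₀ - ρ₁)) ^ (1 / ρ₁),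
    Real.rpow_pos_of_pos (by have := sub_pos.2 hρ₁ρ₀; positivity) _, ?_⟩
  intro ν hν hνA R hR f u hf hu hucont hu0 hsuper
  have hQ : MeasurableSet (cube n 0 R) := (isOpen_cube n 0 R).measurableSet
  have : IsFiniteMeasure (volume.restrict (cube n 0 R)) :=
    isFiniteMeasure_restrict.2
      ((measure_mono (cube_subset_closedBall n 0 hR.le)).trans_lt measure_closedBall_lt_top).ne
  have hA : 0 ≤ sInf (u '' cube n 0 (3 * R)) + sSup ((fun x => |f x| / hfun n ν x R) ''
      Metric.ball (0 : Eucl n) (2 * Real.sqrt n * R)) :=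
    add_nonneg (Real.sInf_nonneg (forall_mem_image.2 fun x _ => hu0 x))
      (Real.sSup_nonneg (forall_mem_image.2 fun x _ =>
        div_nonneg (abs_nonneg _) (hfun_nonneg hν.2.1 x R)))
  have hbound := average_rpow_le_of_meas_lt_le (ae_of_all _ hu0)
    ((hucont.mono (cube_subset_ball hn hR)).aemeasurable hQ) hC₀.le hρ₁ hρ₁ρ₀
    (fun t ht => by
      rw [Measure.restrict_apply' hQ, Measure.restrict_apply_univ, inter_comm]
      exact hPTM ν hν hνA R hR f u hf hu hucont hu0 hsuper t ht) hA
  rwa [Measure.restrict_apply_univ] at hbound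

/-- **Theorem 5.4** (weak Harnack inequality); `ρ₀` is the exponent from the
point-to-measure estimate (Theorem 5.3). -/
theorem weak_harnack (n : ℕ) (hn : 1 ≤ n) (lam Lam cU α : ℝ)
    (hlam : 0 < lam) (hlamLam : lam ≤ Lam) (hcU : 0 < cU) (hα : 0 < α)
    (C₀ ρ₀ : ℝ) (hC₀ : 0 < C₀) (hρ₀ : 0 < ρ₀)
    (hPTM : ∀ ν : Eucl n → ℝ → ℝ, KernelOK n ν → CondA n ν cU α →
      ∀ R : ℝ, 0 < R →
        ∀ f u : Eucl n → ℝ, IsBdd n f → IsBdd n u →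
          ContinuousOn u (Metric.ball (0 : Eucl n) (2 * Real.sqrt n * R)) →
          (∀ x, 0 ≤ u x) →
          IsViscositySupersol n lam Lam ν u (fun x => |f x|)
            (Metric.ball (0 : Eucl n) (2 * Real.sqrt n * R)) →
          ∀ t : ℝ, 0 < t →
            volume {x ∈ cube n (0 : Eucl n) R | t < u x} ≤
              ENNReal.ofReal (C₀ * (sInf (u '' cube n 0 (3 * R)) +
                  sSup ((fun x => |f x| / hfun n ν x R) ''
                    Metric.ball (0 : Eucl n) (2 * Real.sqrt n * R))) ^ ρ₀ * t ^ (-ρ₀)) *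
                volume (cube n (0 : Eucl n) R)) :
    ∀ ρ₁ ∈ Set.Ioo (0 : ℝ) ρ₀, ∃ C : ℝ, 0 < C ∧
      ∀ ν : Eucl n → ℝ → ℝ, KernelOK n ν → CondA n ν cU α →
        ∀ R : ℝ, 0 < R →
          ∀ f u : Eucl n → ℝ, IsBdd n f → IsBdd n u →
            ContinuousOn u (Metric.ball (0 : Eucl n) (2 * Real.sqrt n * R)) →
            (∀ x, 0 ≤ u x) →
            IsViscositySupersol n lam Lam ν u (fun x => |f x|)
              (Metric.ball (0 : Eucl n) (2 * Real.sqrt n * R)) →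
            ((volume (cube n (0 : Eucl n) R)).toReal⁻¹ *
                ∫ x in cube n (0 : Eucl n) R, u x ^ ρ₁) ^ (1 / ρ₁) ≤
              C * (sInf (u '' cube n 0 (3 * R)) +
                sSup ((fun x => |f x| / hfun n ν x R) ''
                  Metric.ball (0 : Eucl n) (2 * Real.sqrt n * R))) :=
  weak_harnack_general n hn lam Lam cU α C₀ ρ₀ hC₀ hPTM
end
end

section
/- Let ν satisfy (A1) and (A2). Then the following are equivalent: (1) there exist constants α > 0 and c_U > 0 such that h(x,tr) ≤ c_U t^{−α} h(x,r) for all x ∈ ℝⁿ, all r > 0 and all t ≥ 1 (the weak scaling condition (A3)); (2) there exists a constant C₁ > 0 such that h(x,r) ≤ C₁ K(x,r) for all x ∈ ℝⁿ and all r > 0. -/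
open MeasureTheory Metric Set
open scoped ENNReal

noncomputable section

/-! The weights of `h` and `K` satisfy two pointwise inequalities, which integrate to
`h(r) ≤ h(tr) + t² K(tr)` for `t ≥ 1` and to `h(2r) + (3/4) K(r) ≤ h(r)`.

If (A3) holds, choose `t` with `c_U t^{-α} ≤ 1/2`; the substitution `y = t z` together with the
monotonicity (A2) gives `K(tr) ≤ tⁿ K(r)`, hence `h(r) ≤ 2 t^{n+2} K(r)`.
Conversely, `h ≤ C K` with `C ≥ 1` turns the second inequality into the doubling estimate
`h(2r) ≤ (1 - 3/(4C)) h(r)`, which iterates along `r, 2r, 4r, …` to the power decay (A3). -/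

open Filter Module
open scoped Pointwise

lemma min_le_max_mul_min_one {a b c : ℝ} (ha : 0 ≤ a) :
    min c (b * a) ≤ max c b * min 1 a := by
  rcases le_total a 1 with h | h
  · rw [min_eq_right h]
    exact (min_le_right _ _).trans (mul_le_mul_of_nonneg_right (le_max_right _ _) ha)
  · rw [min_eq_left h, mul_one]
    exact (min_le_left _ _).trans (le_max_left _ _)

lemma norm_mul_le_norm_mul_mul {a b c x : ℝ} (ha : 0 ≤ a) (hb : 0 ≤ b) (hc : 0 ≤ c)
    (h : a ≤ c * b) : ‖a * x‖ ≤ ‖c * (b * x)‖ := by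
  simp only [norm_mul, Real.norm_eq_abs, abs_of_nonneg ha, abs_of_nonneg hb, abs_of_nonneg hc,
    ← mul_assoc]
  exact mul_le_mul_of_nonneg_right h (abs_nonneg x)

lemma mul_le_mul_of_le_on_Ioi {f : ℝ → ℝ} (hf0 : ∀ s, 0 < s → 0 ≤ f s) {w₁ w₂ : ℝ → ℝ}
    (h0 : w₁ 0 = w₂ 0) (hw : ∀ s, 0 < s → w₁ s ≤ w₂ s) {s : ℝ} (hs : 0 ≤ s) :
    w₁ s * f s ≤ w₂ s * f s := by
  rcases hs.eq_or_lt with rfl | hs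
  · rw [h0]
  · exact mul_le_mul_of_nonneg_right (hw s hs) (hf0 s hs)

lemma sq_mul_apply_nonneg {f : ℝ → ℝ} (hf0 : ∀ s, 0 < s → 0 ≤ f s) {s : ℝ} (hs : 0 ≤ s) :
    0 ≤ s ^ 2 * f s := by
  simpa using mul_le_mul_of_le_on_Ioi hf0 (w₁ := 0) (w₂ := (· ^ 2)) (by simp)
    (fun s _ => sq_nonneg s) hs

lemma apply_mul_le_of_apply_two_mul_le {φ : ℝ → ℝ} {α : ℝ} (hα : 0 ≤ α)
    (hanti : AntitoneOn φ (Ioi 0)) (hnonneg : ∀ r, 0 < r → 0 ≤ φ r)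
    (hdouble : ∀ r, 0 < r → φ (2 * r) ≤ 2 ^ (-α) * φ r) {r t : ℝ} (hr : 0 < r) (ht : 1 ≤ t) :
    φ (t * r) ≤ 2 ^ α * t ^ (-α) * φ r := by
  have hiter : ∀ k : ℕ, φ (2 ^ k * r) ≤ ((2 : ℝ) ^ (-α)) ^ k * φ r := by
    intro k
    induction k with
    | zero => simp
    | succ k ih =>
      calc φ (2 ^ (k + 1) * r) = φ (2 * (2 ^ k * r)) := by ring_nf
        _ ≤ 2 ^ (-α) * φ (2 ^ k * r) := hdouble _ (by positivity)
        _ ≤ 2 ^ (-α) * (((2 : ℝ) ^ (-α)) ^ k * φ r) := by gcongr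
        _ = ((2 : ℝ) ^ (-α)) ^ (k + 1) * φ r := by ring
  obtain ⟨k, hk, hk'⟩ := exists_nat_pow_near ht one_lt_two
  have hpow : ((2 : ℝ) ^ (-α)) ^ k ≤ 2 ^ α * t ^ (-α) :=
    calc ((2 : ℝ) ^ (-α)) ^ k = 2 ^ α * ((2 : ℝ) ^ (-α)) ^ (k + 1) := by
          rw [pow_succ, mul_left_comm, ← Real.rpow_add two_pos, add_neg_cancel, Real.rpow_zero,
            mul_one]
      _ = 2 ^ α * ((2 : ℝ) ^ (k + 1)) ^ (-α) := by rw [Real.rpow_pow_comm zero_le_two]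
      _ ≤ 2 ^ α * t ^ (-α) := mul_le_mul_of_nonneg_left
          (Real.rpow_le_rpow_of_nonpos (one_pos.trans_le ht) hk'.le (neg_nonpos.2 hα))
          (by positivity)
  calc φ (t * r) ≤ φ (2 ^ k * r) :=
        hanti (mem_Ioi.2 (by positivity)) (mem_Ioi.2 (mul_pos (one_pos.trans_le ht) hr)) (by gcongr)
    _ ≤ ((2 : ℝ) ^ (-α)) ^ k * φ r := hiter k
    _ ≤ 2 ^ α * t ^ (-α) * φ r := mul_le_mul_of_nonneg_right hpow (hnonneg r hr)

section Radial

variable {E : Type*} [NormedAddCommGroup E] {f : ℝ → ℝ}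

lemma min_div_sq_add_indicator_mul_eq (ρ σ c : ℝ) :
    (fun y : E => (min 1 (‖y‖ ^ 2 / ρ ^ 2) + c * (Iio σ).indicator (· ^ 2) ‖y‖) * f ‖y‖) =
      fun y => min 1 (‖y‖ ^ 2 / ρ ^ 2) * f ‖y‖ +
        c * (ball 0 σ).indicator (fun y => ‖y‖ ^ 2 * f ‖y‖) y := by
  ext y
  rcases lt_or_ge ‖y‖ σ with h | h
  · rw [indicator_of_mem (mem_Iio.2 h), indicator_of_mem (mem_ball_zero_iff.2 h)]
    ring
  · rw [indicator_of_notMem (by simpa using h), indicator_of_notMem (by simpa using h)]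
    ring

variable [MeasurableSpace E] {μ : Measure E} {r ρ : ℝ}

/-- For the profile `f = ν x` and `μ = volume`, this is `hfun n ν x` by definition. -/
def radialH (μ : Measure E) (f : ℝ → ℝ) (r : ℝ) : ℝ :=
  ∫ y, min 1 (‖y‖ ^ 2 / r ^ 2) * f ‖y‖ ∂μ

/-- For the profile `f = ν x` and `μ = volume`, `radialI μ f r / r ^ 2` is `Kfun n ν x r` by
definition. -/
def radialI (μ : Measure E) (f : ℝ → ℝ) (r : ℝ) : ℝ :=
  ∫ y in ball 0 r, ‖y‖ ^ 2 * f ‖y‖ ∂μ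

lemma integral_mul_apply_norm_mono (hf0 : ∀ s, 0 < s → 0 ≤ f s) {w₁ w₂ : ℝ → ℝ}
    (h₁ : Integrable (fun y => w₁ ‖y‖ * f ‖y‖) μ) (h₂ : Integrable (fun y => w₂ ‖y‖ * f ‖y‖) μ)
    (h0 : w₁ 0 = w₂ 0) (hw : ∀ s, 0 < s → w₁ s ≤ w₂ s) :
    ∫ y, w₁ ‖y‖ * f ‖y‖ ∂μ ≤ ∫ y, w₂ ‖y‖ * f ‖y‖ ∂μ :=
  integral_mono h₁ h₂ fun y => mul_le_mul_of_le_on_Ioi hf0 h0 hw (norm_nonneg y)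

lemma radialH_nonneg (hf0 : ∀ s, 0 < s → 0 ≤ f s) : 0 ≤ radialH μ f r :=
  integral_nonneg fun y => by
    simpa using mul_le_mul_of_le_on_Ioi hf0 (w₁ := 0) (w₂ := fun s => min 1 (s ^ 2 / r ^ 2))
      (by simp) (fun s _ => le_min zero_le_one (by positivity)) (norm_nonneg y)

lemma radialI_nonneg (hf0 : ∀ s, 0 < s → 0 ≤ f s) : 0 ≤ radialI μ f r :=
  integral_nonneg fun y => sq_mul_apply_nonneg hf0 (norm_nonneg y)

variable [OpensMeasurableSpace E]

lemma integrable_min_div_sq (hf : Measurable f)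
    (hint : Integrable (fun y => min 1 (‖y‖ ^ 2) * f ‖y‖) μ) (r : ℝ) :
    Integrable (fun y => min 1 (‖y‖ ^ 2 / r ^ 2) * f ‖y‖) μ := by
  refine (hint.const_mul (max 1 (r ^ 2)⁻¹)).mono (by fun_prop) (.of_forall fun y => ?_)
  have hmin : min 1 (‖y‖ ^ 2 / r ^ 2) ≤ max 1 (r ^ 2)⁻¹ * min 1 (‖y‖ ^ 2) := by
    simpa only [div_eq_inv_mul] using
      min_le_max_mul_min_one (c := 1) (sq_nonneg ‖y‖)
  exact norm_mul_le_norm_mul_mul (le_min zero_le_one (by positivity))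
    (le_min zero_le_one (sq_nonneg _)) (le_max_of_le_left zero_le_one) hmin

lemma integrableOn_ball_sq_mul (hf : Measurable f)
    (hint : Integrable (fun y => min 1 (‖y‖ ^ 2) * f ‖y‖) μ) (r : ℝ) :
    IntegrableOn (fun y => ‖y‖ ^ 2 * f ‖y‖) (ball 0 r) μ := by
  refine (hint.const_mul (max (r ^ 2) 1)).restrict.mono (by fun_prop)
    (ae_restrict_of_forall_mem measurableSet_ball fun y hy => ?_)
  have hyr : ‖y‖ ^ 2 ≤ r ^ 2 :=
    pow_le_pow_left₀ (norm_nonneg y) (mem_ball_zero_iff.1 hy).le 2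
  have hmin : ‖y‖ ^ 2 ≤ max (r ^ 2) 1 * min 1 (‖y‖ ^ 2) :=
    calc ‖y‖ ^ 2 = min (r ^ 2) (1 * ‖y‖ ^ 2) := by rw [one_mul, min_eq_right hyr]
      _ ≤ max (r ^ 2) 1 * min 1 (‖y‖ ^ 2) := min_le_max_mul_min_one (sq_nonneg _)
  exact norm_mul_le_norm_mul_mul (sq_nonneg _) (le_min zero_le_one (sq_nonneg _))
    (le_max_of_le_right zero_le_one) hmin

lemma radialH_antitoneOn (hf : Measurable f) (hf0 : ∀ s, 0 < s → 0 ≤ f s)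
    (hint : Integrable (fun y => min 1 (‖y‖ ^ 2) * f ‖y‖) μ) :
    AntitoneOn (radialH μ f) (Ioi 0) := by
  intro r hr ρ _ hrρ
  refine integral_mul_apply_norm_mono hf0 (w₁ := fun s => min 1 (s ^ 2 / ρ ^ 2))
    (w₂ := fun s => min 1 (s ^ 2 / r ^ 2)) (integrable_min_div_sq hf hint ρ)
    (integrable_min_div_sq hf hint r) (by simp) fun s _ => ?_
  have hr : 0 < r := hr
  gcongr

lemma integrable_min_div_sq_add_indicator (hf : Measurable f)
    (hint : Integrable (fun y => min 1 (‖y‖ ^ 2) * f ‖y‖) μ) (ρ σ c : ℝ) :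
    Integrable (fun y => (min 1 (‖y‖ ^ 2 / ρ ^ 2) + c * (Iio σ).indicator (· ^ 2) ‖y‖) * f ‖y‖)
      μ := by
  rw [min_div_sq_add_indicator_mul_eq]
  exact (integrable_min_div_sq hf hint ρ).add
    (((integrableOn_ball_sq_mul hf hint σ).integrable_indicator measurableSet_ball).const_mul c)

lemma radialH_add_mul_radialI (hf : Measurable f)
    (hint : Integrable (fun y => min 1 (‖y‖ ^ 2) * f ‖y‖) μ) (ρ σ c : ℝ) :
    radialH μ f ρ + c * radialI μ f σ =
      ∫ y, (min 1 (‖y‖ ^ 2 / ρ ^ 2) + c * (Iio σ).indicator (· ^ 2) ‖y‖) * f ‖y‖ ∂μ := by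
  rw [min_div_sq_add_indicator_mul_eq, integral_add (integrable_min_div_sq hf hint ρ)
    (((integrableOn_ball_sq_mul hf hint σ).integrable_indicator measurableSet_ball).const_mul c),
    integral_const_mul, integral_indicator measurableSet_ball]
  rfl

lemma radialH_le_radialH_add_radialI_div (hf : Measurable f) (hf0 : ∀ s, 0 < s → 0 ≤ f s)
    (hint : Integrable (fun y => min 1 (‖y‖ ^ 2) * f ‖y‖) μ) (hr : 0 < r) (hrρ : r ≤ ρ) :
    radialH μ f r ≤ radialH μ f ρ + radialI μ f ρ / r ^ 2 := by
  rw [div_eq_inv_mul, radialH_add_mul_radialI hf hint]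
  refine integral_mul_apply_norm_mono hf0 (w₁ := fun s => min 1 (s ^ 2 / r ^ 2))
    (w₂ := fun s => min 1 (s ^ 2 / ρ ^ 2) + (r ^ 2)⁻¹ * (Iio ρ).indicator (· ^ 2) s)
    (integrable_min_div_sq hf hint r) (integrable_min_div_sq_add_indicator hf hint ρ ρ _)
    (by simp) fun s hs => ?_
  rcases lt_or_ge s ρ with hsρ | hρs
  · rw [indicator_of_mem (mem_Iio.2 hsρ), ← div_eq_inv_mul]
    exact (min_le_right _ _).trans (le_add_of_nonneg_left (le_min zero_le_one (by positivity)))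
  · have : 1 ≤ s ^ 2 / ρ ^ 2 := by
      rw [one_le_div (pow_pos (hr.trans_le hrρ) 2)]
      exact pow_le_pow_left₀ (hr.le.trans hrρ) hρs 2
    rw [indicator_of_notMem (by simpa using hρs), mul_zero, add_zero, min_eq_left this]
    exact min_le_left _ _

lemma radialH_two_mul_add_le (hf : Measurable f) (hf0 : ∀ s, 0 < s → 0 ≤ f s)
    (hint : Integrable (fun y => min 1 (‖y‖ ^ 2) * f ‖y‖) μ) (hr : 0 < r) :
    radialH μ f (2 * r) + 3 / 4 * (radialI μ f r / r ^ 2) ≤ radialH μ f r := by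
  rw [div_eq_inv_mul (radialI μ f r), ← mul_assoc, radialH_add_mul_radialI hf hint]
  refine integral_mul_apply_norm_mono hf0 (w₂ := fun s => min 1 (s ^ 2 / r ^ 2))
    (w₁ := fun s => min 1 (s ^ 2 / (2 * r) ^ 2) + 3 / 4 * (r ^ 2)⁻¹ * (Iio r).indicator (· ^ 2) s)
    (integrable_min_div_sq_add_indicator hf hint _ r _) (integrable_min_div_sq hf hint r)
    (by simp) fun s hs => ?_
  rcases lt_or_ge s r with hsr | hrs
  · have : s ^ 2 / r ^ 2 ≤ 1 := by
      rw [div_le_one (by positivity)]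
      exact pow_le_pow_left₀ hs.le hsr.le 2
    rw [indicator_of_mem (mem_Iio.2 hsr), min_eq_right this]
    calc min 1 (s ^ 2 / (2 * r) ^ 2) + 3 / 4 * (r ^ 2)⁻¹ * s ^ 2
        ≤ s ^ 2 / (2 * r) ^ 2 + 3 / 4 * (r ^ 2)⁻¹ * s ^ 2 := by gcongr; exact min_le_right _ _
      _ = s ^ 2 / r ^ 2 := by field_simp; ring
  · have : 1 ≤ s ^ 2 / r ^ 2 := by
      rw [one_le_div (by positivity)]
      exact pow_le_pow_left₀ hr.le hrs 2
    rw [indicator_of_notMem (by simpa using hrs), mul_zero, add_zero, min_eq_left this]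
    exact min_le_left _ _

lemma radialH_two_mul_le (hf : Measurable f) (hf0 : ∀ s, 0 < s → 0 ≤ f s)
    (hint : Integrable (fun y => min 1 (‖y‖ ^ 2) * f ‖y‖) μ) {C : ℝ} (hC : 0 < C) (hr : 0 < r)
    (hK : radialH μ f r ≤ C * (radialI μ f r / r ^ 2)) :
    radialH μ f (2 * r) ≤ (1 - 3 / (4 * C)) * radialH μ f r := by
  have hdouble := radialH_two_mul_add_le hf hf0 hint hr
  have : 3 / (4 * C) * radialH μ f r ≤ 3 / 4 * (radialI μ f r / r ^ 2) :=
    calc 3 / (4 * C) * radialH μ f r ≤ 3 / (4 * C) * (C * (radialI μ f r / r ^ 2)) := by gcongr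
      _ = 3 / 4 * (radialI μ f r / r ^ 2) := by field_simp
  linarith

lemma radialH_mul_le_of_le_mul_radialI_div (hf : Measurable f) (hf0 : ∀ s, 0 < s → 0 ≤ f s)
    (hint : Integrable (fun y => min 1 (‖y‖ ^ 2) * f ‖y‖) μ) {C α : ℝ} (hC : 0 < C)
    (hα : 0 ≤ α) (h2α : (2 : ℝ) ^ (-α) = 1 - 3 / (4 * C))
    (hK : ∀ r, 0 < r → radialH μ f r ≤ C * (radialI μ f r / r ^ 2)) {t : ℝ} (hr : 0 < r)
    (ht : 1 ≤ t) :
    radialH μ f (t * r) ≤ 2 ^ α * t ^ (-α) * radialH μ f r :=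
  apply_mul_le_of_apply_two_mul_le hα (radialH_antitoneOn hf hf0 hint)
    (fun _ _ => radialH_nonneg hf0)
    (fun r hr => h2α ▸ radialH_two_mul_le hf hf0 hint hC hr (hK r hr)) hr ht

end Radial

section Haar

variable {E : Type*} [NormedAddCommGroup E] [NormedSpace ℝ E] [MeasurableSpace E]
  [BorelSpace E] [FiniteDimensional ℝ E] (μ : Measure E) [μ.IsAddHaarMeasure] {f : ℝ → ℝ}
  {r t : ℝ}

lemma radialI_mul_le (hf : Measurable f) (hf0 : ∀ s, 0 < s → 0 ≤ f s)
    (hint : Integrable (fun y => min 1 (‖y‖ ^ 2) * f ‖y‖) μ) (hanti : AntitoneOn f (Ioi 0))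
    (ht : 1 ≤ t) :
    radialI μ f (t * r) ≤ t ^ (finrank ℝ E + 2) * radialI μ f r := by
  have ht0 : 0 < t := one_pos.trans_le ht
  have hball : t • ball (0 : E) r = ball 0 (t * r) := by
    rw [_root_.smul_ball ht0.ne', smul_zero, Real.norm_of_nonneg ht0.le]
  have hsub := Measure.setIntegral_comp_smul_of_pos μ (fun y => ‖y‖ ^ 2 * f ‖y‖) (ball 0 r) ht0
  rw [hball, smul_eq_mul, eq_inv_mul_iff_mul_eq₀ (by positivity)] at hsub
  have hpt : ∀ z : E, ‖t • z‖ ^ 2 * f ‖t • z‖ ≤ t ^ 2 * (‖z‖ ^ 2 * f ‖z‖) := by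
    intro z
    rw [norm_smul, Real.norm_of_nonneg ht0.le, mul_pow, mul_assoc]
    refine mul_le_mul_of_nonneg_left ?_ (by positivity)
    rcases (norm_nonneg z).eq_or_lt with hz | hz
    · simp [← hz]
    · exact mul_le_mul_of_nonneg_left
        (hanti hz (mul_pos ht0 hz) (le_mul_of_one_le_left hz.le ht)) (sq_nonneg _)
  calc radialI μ f (t * r)
      = t ^ finrank ℝ E * ∫ z in ball 0 r, ‖t • z‖ ^ 2 * f ‖t • z‖ ∂μ := hsub.symm
    _ ≤ t ^ finrank ℝ E * ∫ z in ball 0 r, t ^ 2 * (‖z‖ ^ 2 * f ‖z‖) ∂μ := by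
      refine mul_le_mul_of_nonneg_left (integral_mono_of_nonneg (.of_forall fun z => ?_)
        ((integrableOn_ball_sq_mul hf hint r).const_mul _) (.of_forall hpt)) (by positivity)
      exact sq_mul_apply_nonneg hf0 (norm_nonneg _)
    _ = t ^ (finrank ℝ E + 2) * radialI μ f r := by
      rw [integral_const_mul, pow_add, mul_assoc]
      rfl

lemma radialH_le_mul_radialI_div_of_radialH_mul_le_half (hf : Measurable f)
    (hf0 : ∀ s, 0 < s → 0 ≤ f s) (hint : Integrable (fun y => min 1 (‖y‖ ^ 2) * f ‖y‖) μ)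
    (hanti : AntitoneOn f (Ioi 0)) (hr : 0 < r) (ht : 1 ≤ t)
    (hhalf : radialH μ f (t * r) ≤ 1 / 2 * radialH μ f r) :
    radialH μ f r ≤ 2 * t ^ (finrank ℝ E + 2) * (radialI μ f r / r ^ 2) := by
  have hsplit := radialH_le_radialH_add_radialI_div hf hf0 hint hr
    (le_mul_of_one_le_left hr.le ht)
  have hscale : radialI μ f (t * r) / r ^ 2 ≤ t ^ (finrank ℝ E + 2) * (radialI μ f r / r ^ 2) := by
    rw [← mul_div_assoc]
    gcongr
    exact radialI_mul_le μ hf hf0 hint hanti ht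
  linarith

end Haar

lemma exists_pos_two_rpow_neg_eq {θ : ℝ} (h0 : 0 < θ) (h1 : θ < 1) :
    ∃ α : ℝ, 0 < α ∧ (2 : ℝ) ^ (-α) = θ :=
  ⟨-Real.logb 2 θ, neg_pos.2 (Real.logb_neg one_lt_two h0 h1),
    by rw [neg_neg, Real.rpow_logb two_pos (by norm_num) h0]⟩

theorem weak_scaling_equiv_general (n : ℕ) (ν : Eucl n → ℝ → ℝ)
    (hmeas : Measurable (Function.uncurry ν)) (hnonneg : ∀ x r, 0 < r → 0 ≤ ν x r)
    (hint : ∀ x : Eucl n, Integrable (fun y : Eucl n => min 1 (‖y‖ ^ 2) * ν x ‖y‖))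
    (hA2 : CondA2 n ν) :
    (∃ α : ℝ, 0 < α ∧ ∃ cU : ℝ, 0 < cU ∧ CondA3 n ν cU α) ↔
      (∃ C₁ : ℝ, 0 < C₁ ∧ ∀ (x : Eucl n) (r : ℝ), 0 < r →
        hfun n ν x r ≤ C₁ * Kfun n ν x r) := by
  have hf : ∀ x, Measurable (ν x) := fun x => hmeas.comp measurable_prodMk_left
  constructor
  · rintro ⟨α, hα, cU, -, hA3⟩
    obtain ⟨t, ht, htc⟩ : ∃ t : ℝ, 1 ≤ t ∧ cU * t ^ (-α) ≤ 1 / 2 :=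
      ((eventually_ge_atTop 1).and (((tendsto_rpow_neg_atTop hα).const_mul cU).eventually
        (ge_mem_nhds (by norm_num)))).exists
    refine ⟨2 * t ^ (n + 2), by positivity, fun x r hr => ?_⟩
    have hhalf : hfun n ν x (t * r) ≤ 1 / 2 * hfun n ν x r := (hA3 x r t hr ht).trans
      (mul_le_mul_of_nonneg_right htc (radialH_nonneg (μ := volume) (hnonneg x)))
    have := radialH_le_mul_radialI_div_of_radialH_mul_le_half volume (hf x) (hnonneg x) (hint x)
      (fun s hs _ _ hsr => hA2 x s _ hs hsr) hr ht hhalf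
    rwa [finrank_euclideanSpace_fin] at this
  · rintro ⟨C₁, -, hK⟩
    set C := max C₁ 1
    have hC0 : 0 < 3 / (4 * C) := by positivity
    have hC1 : 3 / (4 * C) ≤ 3 / 4 := by gcongr; linarith [le_max_right C₁ 1]
    obtain ⟨α, hα, h2α⟩ :=
      exists_pos_two_rpow_neg_eq (θ := 1 - 3 / (4 * C)) (by linarith) (by linarith)
    refine ⟨α, hα, 2 ^ α, by positivity, fun x r t hr ht =>
      radialH_mul_le_of_le_mul_radialI_div (hf x) (hnonneg x) (hint x) (by positivity) hα.le h2α
        (fun r hr => (hK x r hr).trans (mul_le_mul_of_nonneg_right (le_max_left _ _) ?_)) hr ht⟩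
    exact div_nonneg (radialI_nonneg (hnonneg x)) (sq_nonneg r)

/-- **Proposition 2.6** (equivalent formulations of the weak scaling condition). -/
theorem weak_scaling_equiv (n : ℕ) (hn : 1 ≤ n) (ν : Eucl n → ℝ → ℝ)
    (hmeas : Measurable (Function.uncurry ν)) (hnonneg : ∀ x r, 0 < r → 0 ≤ ν x r)
    (hint : ∀ x : Eucl n, Integrable (fun y : Eucl n => min 1 (‖y‖ ^ 2) * ν x ‖y‖))
    (hA1 : CondA1 n ν) (hA2 : CondA2 n ν) :
    (∃ α : ℝ, 0 < α ∧ ∃ cU : ℝ, 0 < cU ∧ CondA3 n ν cU α) ↔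
      (∃ C₁ : ℝ, 0 < C₁ ∧ ∀ (x : Eucl n) (r : ℝ), 0 < r →
        hfun n ν x r ≤ C₁ * Kfun n ν x r) :=
  weak_scaling_equiv_general n ν hmeas hnonneg hint hA2
end
end
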